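/- Let σ be an acyclic system of permutations on the edges of n·Δ_{d−1}, i.e., a family (σ_{ab})_{a≠b∈[d]} of permutations of [n] with σ_{ba} the reverse of σ_{ab}, such that each tournament G_{ij}(σ) on [d] (with a→b iff i precedes j in σ_{ab}) is acyclic. Define σ* = (σ*_{ij})_{i≠j∈[n]} where σ*_{ij} lists the vertices of G_{ij}(σ) by decreasing out-degree. Then σ* is itself an acyclic system (i.e., σ*_{ji} is the reverse of σ*_{ij} and all tournaments G_{ab}(σ*) on [n] are acyclic), and (σ*)* = σ. -/

import Mathlib

open scoped Classical

/-- `i` precedes `j` in the permutation `u`, viewed as the word `u 0, u 1, ..., u (n-1)`. -/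
def precedes {n : ℕ} (u : Equiv.Perm (Fin n)) (i j : Fin n) : Prop :=
  u.symm i < u.symm j

/-- A directed graph (relation) is acyclic: no directed cycle, i.e. no vertex reaches
itself by a nonempty directed walk. -/
def IsAcyclicRel {d : ℕ} (r : Fin d → Fin d → Prop) : Prop :=
  ∀ a, ¬ Relation.TransGen r a a

/-- The tournament `G_{ij}(σ)` on `[d]`: `a → b` iff `i` precedes `j` in `σ_{ab}`. -/
def tournG {n d : ℕ} (σ : Fin d → Fin d → Equiv.Perm (Fin n)) (i j : Fin n)
    (a b : Fin d) : Prop :=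
  a ≠ b ∧ precedes (σ a b) i j

/-- A system of permutations on the edges of `n·Δ_{d-1}`: a family `(σ_{ab})` of
permutations of `[n]` with `σ_{ba}` the reverse word of `σ_{ab}`. -/
def IsSystem {n d : ℕ} (σ : Fin d → Fin d → Equiv.Perm (Fin n)) : Prop :=
  ∀ a b : Fin d, a ≠ b → ∀ k : Fin n, σ b a k = σ a b k.rev

/-- An acyclic system of permutations: all the tournaments `G_{ij}(σ)` are acyclic. -/
def IsAcyclicSystem {n d : ℕ} (σ : Fin d → Fin d → Equiv.Perm (Fin n)) : Prop :=
  IsSystem σ ∧ ∀ i j : Fin n, i ≠ j → IsAcyclicRel (tournG σ i j)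

/-- `a` is the unique source (vertex with no incoming edge) of the digraph `r`. -/
def IsUniqueSource {d : ℕ} (r : Fin d → Fin d → Prop) (a : Fin d) : Prop :=
  (∀ b, ¬ r b a) ∧ ∀ a', (∀ b, ¬ r b a') → a' = a

/-- Out-degree of a vertex in a digraph on `[d]`. -/
noncomputable def outdeg {d : ℕ} (r : Fin d → Fin d → Prop) (a : Fin d) : ℕ :=
  (Finset.univ.filter fun b => r a b).card

/-- `a`-th coordinate of the position of the `i`-th simplex of an acyclic system `σ`:
`x_a^i = |{ j ≠ i : a is the unique source of G_{ij}(σ) }|`. -/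
noncomputable def simplexPos {n d : ℕ} (σ : Fin d → Fin d → Equiv.Perm (Fin n))
    (i : Fin n) (a : Fin d) : ℕ :=
  (Finset.univ.filter fun j : Fin n => j ≠ i ∧ IsUniqueSource (tournG σ i j) a).card

/-- `τ` is the dual system `σ*` of `σ`: for `i ≠ j`, the word `τ i j` lists the vertices
of the tournament `G_{ij}(σ)` in decreasing order of out-degree. -/
def IsDualOf {n d : ℕ} (σ : Fin d → Fin d → Equiv.Perm (Fin n))
    (τ : Fin n → Fin n → Equiv.Perm (Fin d)) : Prop :=
  ∀ i j : Fin n, i ≠ j → ∀ k : Fin d,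
    outdeg (tournG σ i j) (τ i j k) = d - 1 - (k : ℕ)

/-- The order-preserving injection `Fin (d-1) → Fin d` skipping `a`. -/
def liftIdx {d : ℕ} (a : Fin d) (b : Fin (d - 1)) : Fin d :=
  if h : (b : ℕ) < (a : ℕ) then ⟨b, by have := a.isLt; omega⟩
  else ⟨(b : ℕ) + 1, by have := b.isLt; omega⟩

/-- `v` is the permutation (word) of `[n] ∖ {i}` obtained from `u` by deleting the letter
`i`, with the remaining letters relabelled order-preservingly by `liftIdx i`. -/
def IsDeletionOf {n : ℕ} (v : Equiv.Perm (Fin (n - 1))) (u : Equiv.Perm (Fin n))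
    (i : Fin n) : Prop :=
  ∀ x y : Fin (n - 1), precedes v x y ↔ precedes u (liftIdx i x) (liftIdx i y)

/-! An acyclic tournament is a linear order in which each vertex is preceded exactly by the
vertices of larger out-degree. Hence `σ*_{ij}` is the unique word whose precedence relation
is `G_{ij}(σ)`. Since `σ_{ba}` is the reverse of `σ_{ab}`, `G_{ji}(σ)` is `G_{ij}(σ)` with all
edges reversed, so `σ*_{ji}` is the reverse of `σ*_{ij}`. Unwinding the definitions,
`i → j` in `G_{ab}(σ*)` iff `a → b` in `G_{ij}(σ)` iff `i` precedes `j` in `σ_{ab}`: this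
tournament is the precedence order of `σ_{ab}`, so it is acyclic and its dual word is `σ_{ab}`. -/

section Words

variable {n : ℕ}

lemma precedes_iff_not_precedes (u : Equiv.Perm (Fin n)) {i j : Fin n} (hij : i ≠ j) :
    precedes u i j ↔ ¬ precedes u j i := by
  unfold precedes
  exact ⟨fun h => h.asymm, fun h => (not_lt.1 h).lt_of_ne (u.symm.injective.ne hij)⟩

lemma isAcyclicRel_precedes (u : Equiv.Perm (Fin n)) : IsAcyclicRel (precedes u) := by
  intro i hi
  have key : ∀ x y, Relation.TransGen (precedes u) x y → precedes u x y := fun _ _ h =>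
    Relation.TransGen.trans_induction_on h id fun _ _ hxy hyz => lt_trans hxy hyz
  exact lt_irrefl _ (key i i hi)

lemma outdeg_precedes (u : Equiv.Perm (Fin n)) (x : Fin n) :
    outdeg (precedes u) x = n - 1 - u.symm x := by
  have : Finset.univ.filter (precedes u x) = (Finset.Ioi (u.symm x)).map u.toEmbedding := by
    ext y
    simp only [Finset.mem_filter, Finset.mem_univ, true_and, Finset.mem_map, Finset.mem_Ioi,
      Equiv.coe_toEmbedding, precedes]
    exact ⟨fun h => ⟨u.symm y, h, u.apply_symm_apply y⟩, by rintro ⟨z, hz, rfl⟩; simpa using hz⟩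
  rw [outdeg, this, Finset.card_map, Fin.card_Ioi]

lemma eq_of_precedes_iff {u v : Equiv.Perm (Fin n)}
    (h : ∀ x y, precedes u x y ↔ precedes v x y) : u = v := by
  have hrel : precedes u = precedes v := funext₂ fun x y => propext (h x y)
  suffices u.symm = v.symm by simpa using congrArg Equiv.symm this
  ext x
  have hx := congrArg (outdeg · x) hrel
  simp only [outdeg_precedes] at hx
  have := (u.symm x).isLt
  have := (v.symm x).isLt
  omega

lemma precedes_mul_revPerm (u : Equiv.Perm (Fin n)) (i j : Fin n) :
    precedes (u * Fin.revPerm) i j ↔ precedes u j i := by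
  simp [precedes, Equiv.Perm.mul_def, Fin.revPerm_symm]

end Words

def IsTournament {d : ℕ} (r : Fin d → Fin d → Prop) : Prop :=
  ∀ a b, a ≠ b → (r a b ↔ ¬ r b a)

section Tournaments

variable {d : ℕ} {r : Fin d → Fin d → Prop}

lemma IsAcyclicRel.irrefl (hacy : IsAcyclicRel r) (a : Fin d) : ¬ r a a :=
  fun h => hacy a (.single h)

lemma IsTournament.trans (htour : IsTournament r) (hacy : IsAcyclicRel r) {a b c : Fin d}
    (hab : r a b) (hbc : r b c) : r a c := by
  have hac : Relation.TransGen r a c := (Relation.TransGen.single hab).tail hbc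
  have hne : a ≠ c := by rintro rfl; exact hacy a hac
  by_contra h
  exact hacy a (hac.tail (by have := htour a c hne; tauto))

lemma IsTournament.outdeg_lt_outdeg (htour : IsTournament r) (hacy : IsAcyclicRel r)
    {a b : Fin d} (hab : r a b) : outdeg r b < outdeg r a := by
  apply Finset.card_lt_card
  rw [Finset.ssubset_iff_of_subset]
  · exact ⟨b, by simp [hab], by simp [hacy.irrefl b]⟩
  · intro c hc
    simp only [Finset.mem_filter, Finset.mem_univ, true_and] at hc ⊢
    exact htour.trans hacy hab hc

lemma IsTournament.rel_iff_outdeg_lt (htour : IsTournament r) (hacy : IsAcyclicRel r)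
    {a b : Fin d} (hne : a ≠ b) : r a b ↔ outdeg r b < outdeg r a := by
  refine ⟨htour.outdeg_lt_outdeg hacy, fun h => ?_⟩
  by_contra hab
  have := htour.outdeg_lt_outdeg hacy (by have := htour a b hne; tauto : r b a)
  omega

lemma IsTournament.rel_iff_precedes (htour : IsTournament r) (hacy : IsAcyclicRel r)
    {u : Equiv.Perm (Fin d)} (hu : ∀ k, outdeg r (u k) = d - 1 - k) (a b : Fin d) :
    r a b ↔ precedes u a b := by
  rcases eq_or_ne a b with rfl | hne
  · simp [hacy.irrefl a, precedes]
  have ha := hu (u.symm a)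
  have hb := hu (u.symm b)
  have := (u.symm a).isLt
  have := (u.symm b).isLt
  have : (u.symm a : ℕ) ≠ u.symm b := Fin.val_ne_of_ne (u.symm.injective.ne hne)
  rw [u.apply_symm_apply] at ha hb
  rw [htour.rel_iff_outdeg_lt hacy hne, ha, hb, precedes, Fin.lt_def]
  omega

end Tournaments

section Systems

variable {n d : ℕ} {σ : Fin d → Fin d → Equiv.Perm (Fin n)}

lemma IsSystem.eq_mul_revPerm (hσ : IsSystem σ) {a b : Fin d} (hab : a ≠ b) :
    σ b a = σ a b * Fin.revPerm :=
  Equiv.ext (hσ a b hab)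

lemma IsSystem.precedes_swap (hσ : IsSystem σ) {a b : Fin d} (hab : a ≠ b) (i j : Fin n) :
    precedes (σ b a) i j ↔ precedes (σ a b) j i := by
  rw [hσ.eq_mul_revPerm hab, precedes_mul_revPerm]

lemma IsSystem.tournG_swap (hσ : IsSystem σ) (i j : Fin n) (a b : Fin d) :
    tournG σ j i a b ↔ tournG σ i j b a := by
  rcases eq_or_ne a b with rfl | hab
  · simp [tournG]
  simp only [tournG, ne_eq, hab, Ne.symm hab, not_false_eq_true, true_and,
    hσ.precedes_swap hab]

lemma IsSystem.isTournament_tournG (hσ : IsSystem σ) {i j : Fin n} (hij : i ≠ j) :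
    IsTournament (tournG σ i j) := by
  intro a b hab
  simp only [tournG, ne_eq, hab, Ne.symm hab, not_false_eq_true, true_and,
    hσ.precedes_swap hab, precedes_iff_not_precedes _ hij]

variable {τ : Fin n → Fin n → Equiv.Perm (Fin d)}

lemma IsDualOf.precedes_iff (hτ : IsDualOf σ τ) (hσ : IsAcyclicSystem σ) {i j : Fin n}
    (hij : i ≠ j) (a b : Fin d) : precedes (τ i j) a b ↔ tournG σ i j a b :=
  ((hσ.1.isTournament_tournG hij).rel_iff_precedes (hσ.2 i j hij) (hτ i j hij) a b).symm

lemma IsDualOf.isSystem (hτ : IsDualOf σ τ) (hσ : IsAcyclicSystem σ) : IsSystem τ := by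
  intro i j hij
  suffices τ j i = τ i j * Fin.revPerm from DFunLike.congr_fun this
  refine eq_of_precedes_iff fun a b => ?_
  rw [precedes_mul_revPerm, hτ.precedes_iff hσ hij.symm, hτ.precedes_iff hσ hij,
    hσ.1.tournG_swap]

lemma IsDualOf.tournG_eq (hτ : IsDualOf σ τ) (hσ : IsAcyclicSystem σ) {a b : Fin d}
    (hab : a ≠ b) : tournG τ a b = precedes (σ a b) := by
  ext i j
  rcases eq_or_ne i j with rfl | hij
  · simp [tournG, precedes]
  simp only [tournG, hij, ne_eq, not_false_eq_true, true_and, hτ.precedes_iff hσ hij, hab]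

lemma IsDualOf.isAcyclicSystem (hτ : IsDualOf σ τ) (hσ : IsAcyclicSystem σ) :
    IsAcyclicSystem τ :=
  ⟨hτ.isSystem hσ, fun _ _ hab => hτ.tournG_eq hσ hab ▸ isAcyclicRel_precedes _⟩

end Systems

/-- The dual `σ*` of an acyclic system of permutations `σ` is itself an
acyclic system of permutations, and `(σ*)* = σ`. -/
theorem stmt8 (n d : ℕ) (σ : Fin d → Fin d → Equiv.Perm (Fin n))
    (hσ : IsAcyclicSystem σ)
    (τ : Fin n → Fin n → Equiv.Perm (Fin d)) (hτ : IsDualOf σ τ) :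
    IsAcyclicSystem τ ∧
    ∀ ρ : Fin d → Fin d → Equiv.Perm (Fin n), IsDualOf τ ρ →
      ∀ a b : Fin d, a ≠ b → ρ a b = σ a b := by
  refine ⟨hτ.isAcyclicSystem hσ, fun ρ hρ a b hab => eq_of_precedes_iff fun i j => ?_⟩
  rw [hρ.precedes_iff (hτ.isAcyclicSystem hσ) hab, hτ.tournG_eq hσ hab]
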